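/- arXiv:2305.15600 — 2 statements merged into one kernel-verified Lean document; each statement's English description precedes it below -/
import Mathlib

section
/- If A → B is a rank-preserving weak map of matroids, then for every chain C of flats of B there exists a chain D of flats of A with the same set of ranks (flag) such that applying the B-closure to each flat of D yields exactly the chain C. -/
/-- The rank of a set `X` in a matroid `M`. -/
noncomputable def mrk {α : Type*} (M : Matroid α) (X : Set α) : ℕ :=
  sSup {n | ∃ I, M.Indep I ∧ I ⊆ X ∧ I.ncard = n}

/-- A chain of flats of `M` lying strictly between the minimal flat and the
ground set, totally ordered by inclusion. -/
def IsFlatChain {α : Type*} (M : Matroid α) (C : Set (Set α)) : Prop :=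
  (∀ F ∈ C, M.IsFlat F ∧ F ≠ M.closure ∅ ∧ F ≠ M.E) ∧ IsChain (· ⊆ ·) C

/-!
Choose bases `I F` of the flats `F ∈ C` in `B` that are nested along the chain, and take
`D = {cl_A (I F)}`. For a `B`-independent set `I` the weak map gives `cl_A I ⊆ cl_B I`, hence
`cl_B (cl_A I) = cl_B I`; so `cl_B (cl_A (I F)) = F`, and `I F` is an `A`-basis of `cl_A (I F)`,
which makes the ranks agree. If `cl_A (I F)` were `cl_A ∅` or the ground set, applying `cl_B`
would give `F = cl_B ∅` or `F = E`.
-/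

open Set

theorem IsChain.exists_forall_le_of_finite {β : Type*} [Preorder β] {s : Set β}
    (hs : IsChain (· ≤ ·) s) (hfin : s.Finite) (hne : s.Nonempty) :
    ∃ a ∈ s, ∀ b ∈ s, a ≤ b := by
  obtain ⟨a, ha⟩ := hfin.exists_minimal hne
  refine ⟨a, ha.prop, fun b hb => ?_⟩
  rcases hs.total ha.prop hb with hab | hba
  · exact hab
  · exact ha.le_of_le hb hba

theorem IsChain.image_of_monotoneOn {β γ : Type*} [Preorder β] [Preorder γ] {s : Set β}
    {f : β → γ} (hs : IsChain (· ≤ ·) s) (hf : MonotoneOn f s) :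
    IsChain (· ≤ ·) (f '' s) := by
  rintro _ ⟨x, hx, rfl⟩ _ ⟨y, hy, rfl⟩ -
  rcases hs.total hx hy with hxy | hyx
  · exact Or.inl (hf hx hy hxy)
  · exact Or.inr (hf hy hx hyx)

theorem mrk_eq_ncard_of_isBasis {α : Type*} {M : Matroid α} {J X : Set α}
    (hJ : M.IsBasis J X) (hJfin : J.Finite) : mrk M X = J.ncard := by
  refine IsGreatest.csSup_eq ⟨⟨J, hJ.indep, hJ.subset, rfl⟩, ?_⟩
  rintro _ ⟨I, hI, hIX, rfl⟩
  have hIJ : I.encard ≤ J.encard := hJ.encard_eq_eRk ▸ hI.encard_le_eRk_of_subset hIX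
  exact ENat.toNat_le_toNat hIJ hJfin.encard_lt_top.ne

namespace Matroid

variable {α : Type*}

/-- Removing the least member `G` of the chain, a basis of `G` extending `K` is the new `K`. -/
theorem exists_isBasis_monotoneOn_of_isChain (M : Matroid α) {C : Set (Set α)}
    (hCfin : C.Finite) (hC : IsChain (· ⊆ ·) C) (hCE : ∀ F ∈ C, F ⊆ M.E) {K : Set α}
    (hK : M.Indep K) (hKC : ∀ F ∈ C, K ⊆ F) :
    ∃ I : Set α → Set α, (∀ F ∈ C, M.IsBasis (I F) F ∧ K ⊆ I F) ∧
      MonotoneOn I C := by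
  induction hn : C.ncard generalizing C K with
  | zero =>
    obtain rfl : C = ∅ := (ncard_eq_zero hCfin).mp hn
    exact ⟨id, by simp, subsingleton_empty.monotoneOn id⟩
  | succ n ih =>
    obtain ⟨G, hGC, hGle⟩ :=
      hC.exists_forall_le_of_finite hCfin ((ncard_pos hCfin).mp (by omega))
    obtain ⟨J, hJ, hKJ⟩ := hK.subset_isBasis_of_subset (hKC G hGC) (hCE G hGC)
    obtain ⟨I, hI, hImono⟩ := ih hCfin.sdiff (hC.mono sdiff_subset)
      (fun F hF => hCE F hF.1) hJ.indep (fun F hF => hJ.subset.trans (hGle F hF.1))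
      (by rw [ncard_sdiff_singleton_of_mem hGC, hn, Nat.add_sub_cancel])
    classical
    refine ⟨Function.update I G J, fun F hF => ?_, fun F hF F' hF' hFF' => ?_⟩
    · obtain rfl | hFG := eq_or_ne F G
      · simpa using ⟨hJ, hKJ⟩
      · rw [Function.update_of_ne hFG]
        exact ⟨(hI F ⟨hF, hFG⟩).1, hKJ.trans (hI F ⟨hF, hFG⟩).2⟩
    obtain rfl | hF'G := eq_or_ne F' G
    · obtain rfl : F = F' := subset_antisymm hFF' (hGle F hF)
      exact le_rfl
    rw [Function.update_of_ne hF'G]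
    obtain rfl | hFG := eq_or_ne F G
    · simpa using (hI F' ⟨hF', hF'G⟩).2
    · rw [Function.update_of_ne hFG]
      exact hImono ⟨hF, hFG⟩ ⟨hF', hF'G⟩ hFF'

section WeakMap

variable {A B : Matroid α}

theorem closure_subset_closure_of_weakMap (hE : A.E = B.E)
    (hweak : ∀ I : Set α, B.Indep I → A.Indep I) {I : Set α} (hI : B.Indep I) :
    A.closure I ⊆ B.closure I := by
  intro x hx
  rw [(hweak I hI).mem_closure_iff'] at hx
  rw [hI.mem_closure_iff']
  exact ⟨hE ▸ hx.1, fun hxI => hx.2 (hweak _ hxI)⟩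

theorem closure_closure_of_weakMap (hE : A.E = B.E)
    (hweak : ∀ I : Set α, B.Indep I → A.Indep I) {I : Set α} (hI : B.Indep I) :
    B.closure (A.closure I) = B.closure I :=
  subset_antisymm
    (B.closure_subset_closure_of_subset_closure (closure_subset_closure_of_weakMap hE hweak hI))
    (B.closure_subset_closure (A.subset_closure I (hE ▸ hI.subset_ground)))

end WeakMap

end Matroid

open Matroid in
theorem stmt6_general {α : Type*} (A B : Matroid α) [B.Finite]
    (hE : A.E = B.E) (hweak : ∀ I : Set α, B.Indep I → A.Indep I)
    (C : Set (Set α)) (hC : IsFlatChain B C) :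
    ∃ D : Set (Set α), IsFlatChain A D ∧
      (fun F => mrk A F) '' D = (fun F => mrk B F) '' C ∧
      (fun F => B.closure F) '' D = C := by
  obtain ⟨hCflat, hCchain⟩ := hC
  have hCE : ∀ F ∈ C, F ⊆ B.E := fun F hF => (hCflat F hF).1.subset_ground
  obtain ⟨I, hI, hImono⟩ := B.exists_isBasis_monotoneOn_of_isChain
    (B.ground_finite.finite_subsets.subset hCE) hCchain hCE B.empty_indep
    fun F _ => empty_subset F
  have hIfin : ∀ F ∈ C, (I F).Finite := fun F hF =>
    B.set_finite _ (hI F hF).1.indep.subset_ground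
  have hBcl : ∀ F ∈ C, B.closure (A.closure (I F)) = F := fun F hF => by
    rw [closure_closure_of_weakMap hE hweak (hI F hF).1.indep, (hI F hF).1.closure_eq_closure,
      (hCflat F hF).1.closure]
  refine ⟨(fun F => A.closure (I F)) '' C, ⟨?_, hCchain.image_of_monotoneOn ?_⟩, ?_, ?_⟩
  · rintro _ ⟨F, hF, rfl⟩
    refine ⟨A.isFlat_closure _, fun hmin => (hCflat F hF).2.1 ?_,
      fun htop => (hCflat F hF).2.2 ?_⟩
    · rw [← hBcl F hF, show A.closure (I F) = A.closure ∅ from hmin,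
        closure_closure_of_weakMap hE hweak B.empty_indep]
    · rw [← hBcl F hF, show A.closure (I F) = A.E from htop, hE, B.closure_ground]
  · exact fun F hF F' hF' hFF' => A.closure_subset_closure (hImono hF hF' hFF')
  · rw [image_image]
    refine image_congr fun F hF => ?_
    rw [mrk_eq_ncard_of_isBasis (hweak _ (hI F hF).1.indep).isBasis_closure (hIfin F hF),
      mrk_eq_ncard_of_isBasis (hI F hF).1 (hIfin F hF)]
  · rw [image_image, image_congr hBcl, image_id']

/-- If `A → B` is a rank-preserving weak map of matroids, then
for every chain `C` of flats of `B` there exists a chain `D` of flats of `A`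
with the same flag (set of ranks) such that applying the `B`-closure to each
flat of `D` yields exactly `C`. -/
theorem stmt6 {α : Type*} (A B : Matroid α) [A.Finite] [B.Finite]
    (hE : A.E = B.E) (hweak : ∀ I : Set α, B.Indep I → A.Indep I)
    (hrk : mrk A A.E = mrk B B.E)
    (C : Set (Set α)) (hC : IsFlatChain B C) :
    ∃ D : Set (Set α), IsFlatChain A D ∧
      (fun F => mrk A F) '' D = (fun F => mrk B F) '' C ∧
      (fun F => B.closure F) '' D = C :=
  stmt6_general A B hE hweak C hC
end

section
/- Let M be a matroid of rank r+1 on ground set [n]. For each full chain of flats 0_M ⊊ F_1 ⊊ ... ⊊ F_r ⊊ E, define b_i = min(F_i \ F_{i−1}) (with F_0 = 0_M, F_{r+1} = E). Then the map sending a full chain to the string (b_1, ..., b_{r+1}) is injective, and {b_1, ..., b_{r+1}} is a basis of M. -/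
/-- A full chain of flats of a matroid of rank `r+1`:
`0_M = F_0 ⊊ F_1 ⊊ ... ⊊ F_r ⊊ F_{r+1} = E`, one flat of each rank. -/
def IsFullChain {α : Type*} (M : Matroid α) (r : ℕ) (F : Fin (r + 2) → Set α) : Prop :=
  F 0 = M.closure ∅ ∧ F (Fin.last (r + 1)) = M.E ∧ StrictMono F ∧ ∀ i, M.IsFlat (F i)

/-
Pick `b_i ∈ F_i \ F_{i-1}` along a chain of flats. Climbing the chain, each new `b_i`
avoids the flat `F_{i-1}`, which contains the closure of everything chosen before it, so any
independent subset of `F_k` stays independent when `b_{k+1}, …, b_{r+1}` are added. In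
particular `{b_1, …, b_{r+1}}` is independent of size `r + 1`, hence a basis. If some `x ∈ F_k`
were outside the closure of `b_1, …, b_k`, the same argument would make `x` together with the
whole basis independent; so `F_k` is the closure of `b_1, …, b_k`, and the string `b`
determines the chain.
-/

open Set

namespace Matroid

variable {α : Type*} {M : Matroid α}

lemma Indep.ncard_le_mrk {I X : Set α} (hI : M.Indep I) (hIX : I ⊆ X) (hX : X.Finite) :
    I.ncard ≤ mrk M X :=
  le_csSup ⟨X.ncard, by rintro _ ⟨J, -, hJX, rfl⟩; exact ncard_le_ncard hJX hX⟩
    ⟨I, hI, hIX, rfl⟩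

lemma IsFlat.closure_subset_of_subset {F X : Set α} (hF : M.IsFlat F) (hXF : X ⊆ F) :
    M.closure X ⊆ F :=
  hF.closure ▸ M.closure_subset_closure hXF

lemma Indep.isBase_of_mrk_le_ncard [M.Finite] {I : Set α} (hI : M.Indep I)
    (h : mrk M M.E ≤ I.ncard) : M.IsBase I := by
  refine isBase_iff_maximal_indep.2 ⟨hI, fun J hJ hIJ ↦ ?_⟩
  have hJfin : J.Finite := M.ground_finite.subset hJ.subset_ground
  refine (eq_of_subset_of_ncard_le hIJ ?_ hJfin).symm.subset
  exact (hJ.ncard_le_mrk hJ.subset_ground M.ground_finite).trans h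

lemma Indep.insert_indep_of_subset_isFlat {I F : Set α} {e : α} (hI : M.Indep I)
    (hF : M.IsFlat F) (hIF : I ⊆ F) (heE : e ∈ M.E) (heF : e ∉ F) : M.Indep (insert e I) :=
  (hI.insert_indep_iff_of_notMem fun heI ↦ heF (hIF heI)).2
    ⟨heE, fun he ↦ heF (hF.closure_subset_of_subset hIF he)⟩

end Matroid

def IsChainTransversal {α : Type*} {n : ℕ} (F : Fin (n + 1) → Set α) (b : Fin n → α) :
    Prop :=
  ∀ i, b i ∈ F i.succ \ F i.castSucc

namespace IsChainTransversal

variable {α : Type*} {M : Matroid α} {n : ℕ} {F : Fin (n + 1) → Set α} {b : Fin n → α}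

lemma mem_of_succ_le (hb : IsChainTransversal F b) (hF : Monotone F) {i : Fin n}
    {k : Fin (n + 1)} (hik : i.succ ≤ k) : b i ∈ F k :=
  hF hik (hb i).1

lemma notMem_of_le_castSucc (hb : IsChainTransversal F b) (hF : Monotone F) {i : Fin n}
    {k : Fin (n + 1)} (hki : k ≤ i.castSucc) : b i ∉ F k :=
  fun h ↦ (hb i).2 (hF hki h)

lemma image_castSucc_lt_subset (hb : IsChainTransversal F b) (hF : Monotone F)
    (k : Fin (n + 1)) : b '' {j | j.castSucc < k} ⊆ F k := by
  rintro _ ⟨j, hj, rfl⟩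
  exact hb.mem_of_succ_le hF (Fin.castSucc_lt_iff_succ_le.1 hj)

lemma injective (hb : IsChainTransversal F b) (hF : Monotone F) : Function.Injective b := by
  refine Function.Injective.of_lt_imp_ne fun i j hij heq ↦ ?_
  exact hb.notMem_of_le_castSucc hF le_rfl
    (heq ▸ hb.mem_of_succ_le hF (Fin.succ_le_castSucc_iff.2 hij))

lemma indep_union_image (hb : IsChainTransversal F b) (hF : Monotone F)
    (hflat : ∀ k, M.IsFlat (F k)) (k : Fin (n + 1)) {I : Set α} (hI : M.Indep I)
    (hIk : I ⊆ F k) : M.Indep (I ∪ b '' {j | k ≤ j.castSucc}) := by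
  induction k using Fin.reverseInduction generalizing I with
  | last => simp [hI]
  | cast i ih =>
    have hsplit : {j | i.castSucc ≤ j.castSucc} = insert i {j | i.succ ≤ j.castSucc} := by
      ext j
      simp only [mem_ofPred_eq, mem_insert_iff, Fin.castSucc_le_castSucc_iff,
        Fin.succ_le_castSucc_iff]
      omega
    have hins : M.Indep (insert (b i) I) :=
      hI.insert_indep_of_subset_isFlat (hflat _) hIk ((hflat _).subset_ground (hb i).1) (hb i).2
    have := ih hins (insert_subset (hb i).1 (hIk.trans (hF i.castSucc_le_succ)))
    rwa [hsplit, image_insert_eq, union_insert, ← insert_union]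

lemma isBase_range [M.Finite] (hb : IsChainTransversal F b) (hF : Monotone F)
    (hflat : ∀ k, M.IsFlat (F k)) (hrk : mrk M M.E = n) : M.IsBase (range b) := by
  have hindep := hb.indep_union_image hF hflat 0 M.empty_indep (empty_subset _)
  simp only [Fin.zero_le, ofPred_true, image_univ, empty_union] at hindep
  refine hindep.isBase_of_mrk_le_ncard ?_
  rw [hrk, ncard_range_of_injective (hb.injective hF), Nat.card_eq_fintype_card,
    Fintype.card_fin]

lemma eq_closure_image (hb : IsChainTransversal F b) (hF : Monotone F)
    (hflat : ∀ k, M.IsFlat (F k)) (hB : M.IsBase (range b)) (k : Fin (n + 1)) :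
    F k = M.closure (b '' {j | j.castSucc < k}) := by
  refine subset_antisymm (fun x hxk ↦ ?_)
    ((hflat k).closure_subset_of_subset (hb.image_castSucc_lt_subset hF k))
  by_contra hx
  have hxE : x ∈ M.E := (hflat k).subset_ground hxk
  have hbelowE : b '' {j | j.castSucc < k} ⊆ M.E :=
    (hb.image_castSucc_lt_subset hF k).trans (hflat k).subset_ground
  have hxb : x ∉ range b := by
    rintro ⟨j, rfl⟩
    rcases lt_or_ge j.castSucc k with hj | hj
    · exact hx (M.subset_closure _ hbelowE (mem_image_of_mem b hj))
    · exact hb.notMem_of_le_castSucc hF hj hxk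
  have hrange : range b ⊆ b '' {j | j.castSucc < k} ∪ b '' {j | k ≤ j.castSucc} :=
    range_subset_iff.2 fun j ↦
      (lt_or_ge j.castSucc k).imp (mem_image_of_mem b) (mem_image_of_mem b)
  have hindep := hb.indep_union_image hF hflat k
    ((hB.indep.subset (image_subset_range _ _)).insert_indep_of_subset_isFlat
      (M.isFlat_closure _) (M.subset_closure _ hbelowE) hxE hx)
    (insert_subset hxk (hb.image_castSucc_lt_subset hF k))
  rw [insert_union] at hindep
  exact (hB.insert_dep ⟨hxE, hxb⟩).not_indep (hindep.subset (insert_subset_insert hrange))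

end IsChainTransversal

/-- For a matroid of rank `r+1` on a linearly ordered (finite)
ground set, the map sending a full chain of flats to its Jordan–Hölder string
`(b_1, …, b_{r+1})`, `b_i = min (F_i \ F_{i−1})`, is injective, and
`{b_1, …, b_{r+1}}` is a basis of `M`. -/
theorem stmt13 {α : Type*} [LinearOrder α] (M : Matroid α) [M.Finite] {r : ℕ}
    (hrk : mrk M M.E = r + 1)
    (F G : Fin (r + 2) → Set α) (hF : IsFullChain M r F) (hG : IsFullChain M r G)
    (b c : Fin (r + 1) → α)
    (hb : ∀ i : Fin (r + 1), IsLeast (F i.succ \ F i.castSucc) (b i))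
    (hc : ∀ i : Fin (r + 1), IsLeast (G i.succ \ G i.castSucc) (c i)) :
    (b = c → F = G) ∧ M.IsBase (Set.range b) := by
  have hbF : IsChainTransversal F b := fun i ↦ (hb i).1
  have hcG : IsChainTransversal G c := fun i ↦ (hc i).1
  have hFm := hF.2.2.1.monotone
  have hGm := hG.2.2.1.monotone
  have hbase := hbF.isBase_range hFm hF.2.2.2 hrk
  refine ⟨?_, hbase⟩
  rintro rfl
  funext k
  rw [hbF.eq_closure_image hFm hF.2.2.2 hbase, hcG.eq_closure_image hGm hG.2.2.2 hbase]
end
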